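/- arXiv:1707.08748 — 9 statements merged into one kernel-verified Lean document; each statement's English description precedes it below -/
import Mathlib

section
/- There exist ε-Nash equilibria that are not δ^ε-tolerant equilibria: in Prisoner's Dilemma with payoffs a=b-c for (C,C), 0 for (D,D), b for defecting against a cooperator, and -c for cooperating against a defector (b > c > 0), for any ε with 0 < ε < c, there is δ > 0 such that both players playing δC + (1-δ)D is an ε-Nash equilibrium, but it is not a δ^ε-tolerant equilibrium since C is not an ε-best response. -/
/-- Payoff to a player in the (cost/benefit) Prisoner's Dilemma; `true` is Cooperate,
first argument is the player's own action, second the opponent's. -/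
def pdPay (b c : ℝ) : Bool → Bool → ℝ
  | true, true => b - c
  | true, false => -c
  | false, true => b
  | false, false => 0

/-- Expected payoff of the pure action `s` against an opponent who cooperates
with probability `q`. -/
def pdEP (b c : ℝ) (s : Bool) (q : ℝ) : ℝ :=
  q * pdPay b c s true + (1 - q) * pdPay b c s false

/-- Expected payoff when the player cooperates with probability `p` and the
opponent with probability `q`. -/
def pdE (b c : ℝ) (p q : ℝ) : ℝ :=
  p * pdEP b c true q + (1 - p) * pdEP b c false q

/-!
Against an opponent cooperating with probability `q`, cooperating pays `q b - c` and
defecting pays `q b`, so the mixed strategy `p C + (1 - p) D` pays `q b - p c`. Its best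
deviation (defect) gains exactly `p c`, which is at most `ε` for `p = ε / c`; but the pure
action `C` in its support is worse than `D` by the full cost `c > ε`.
-/

section PrisonersDilemma

variable (b c : ℝ)

theorem pdEP_true (q : ℝ) : pdEP b c true q = q * b - c := by
  simp only [pdEP, pdPay]; ring

theorem pdEP_false (q : ℝ) : pdEP b c false q = q * b := by
  simp only [pdEP, pdPay]; ring

theorem pdE_eq (p q : ℝ) : pdE b c p q = q * b - p * c := by
  rw [pdE, pdEP_true, pdEP_false]; ring

theorem pdEP_true_add_cost (q : ℝ) : pdEP b c true q + c = pdEP b c false q := by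
  rw [pdEP_true, pdEP_false]; ring

variable {c}

theorem pdEP_le_pdE_add (hc : 0 ≤ c) (s : Bool) (p q : ℝ) :
    pdEP b c s q ≤ pdE b c p q + p * c := by
  cases s
  · rw [pdEP_false, pdE_eq]; linarith
  · rw [pdEP_true, pdE_eq]; linarith

end PrisonersDilemma

theorem epsNash_not_deltaEps_tolerant_general (b c ε : ℝ) (hc : 0 < c)
    (hε : 0 < ε) (hεc : ε < c) :
    ∃ δ : ℝ, 0 < δ ∧ δ ≤ 1 ∧
      (∀ s : Bool, pdEP b c s δ ≤ pdE b c δ δ + ε) ∧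
      ¬ (∀ s : Bool, 0 < (if s then δ else 1 - δ) →
          ∀ s' : Bool, pdEP b c s' δ ≤ pdEP b c s δ + ε) := by
  have hδ : 0 < ε / c := div_pos hε hc
  refine ⟨ε / c, hδ, ((div_lt_one hc).mpr hεc).le, fun s => ?_, fun htol => ?_⟩
  · simpa only [div_mul_cancel₀ ε hc.ne'] using pdEP_le_pdE_add b hc.le s (ε / c) (ε / c)
  · have hC_best : pdEP b c false (ε / c) ≤ pdEP b c true (ε / c) + ε := htol true hδ false
    rw [← pdEP_true_add_cost] at hC_best
    linarith

/-- There are ε-Nash equilibria that are not δ^ε-tolerant equilibria: for any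
0 < ε < c, some symmetric profile δC + (1-δ)D with δ > 0 is an ε-Nash equilibrium,
yet C (which is in its support) is not an ε-best response. -/
theorem epsNash_not_deltaEps_tolerant (b c ε : ℝ) (hc : 0 < c) (hb : c < b)
    (hε : 0 < ε) (hεc : ε < c) :
    ∃ δ : ℝ, 0 < δ ∧ δ ≤ 1 ∧
      (∀ s : Bool, pdEP b c s δ ≤ pdE b c δ δ + ε) ∧
      ¬ (∀ s : Bool, 0 < (if s then δ else 1 - δ) →
          ∀ s' : Bool, pdEP b c s' δ ≤ pdEP b c s δ + ε) :=
  epsNash_not_deltaEps_tolerant_general b c ε hc hε hεc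
end

section
/- If the profile π' of tolerance distributions stochastically dominates π (i.e., F^{π'_i}(t) ≤ F^{π_i}(t) for all players i and all t, where F denotes the cumulative distribution function), then every π-tolerant equilibrium is also a π'-tolerant equilibrium. -/
open Finset

/-- A mixed strategy over a finite pure-strategy set: nonnegative weights summing to 1. -/
def IsMixed {α : Type*} [Fintype α] (p : α → ℝ) : Prop :=
  (∀ a, 0 ≤ p a) ∧ ∑ a, p a = 1

/-- The point-mass (pure) strategy on `a`. -/
def pureStrat {α : Type*} [DecidableEq α] (a : α) : α → ℝ :=
  fun b => if b = a then 1 else 0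

/-- Expected utility of a utility function `u` under the mixed profile `σ`. -/
def expU {n : ℕ} {S : Fin n → Type*} [∀ i, Fintype (S i)]
    (u : (∀ j, S j) → ℝ) (σ : ∀ j, S j → ℝ) : ℝ :=
  ∑ s : (∀ j, S j), (∏ j, σ j (s j)) * u s

/-- Expected utility when player `i` deviates to the pure strategy `si`,
while the others follow `σ`. -/
def devU {n : ℕ} {S : Fin n → Type*} [∀ i, Fintype (S i)] [∀ i, DecidableEq (S i)]
    (u : (∀ j, S j) → ℝ) (σ : ∀ j, S j → ℝ) (i : Fin n) (si : S i) : ℝ :=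
  expU u (Function.update σ i (pureStrat si))

/-- `si` is consistent with tolerance `t` for player `i` and the profile `σ₋ᵢ`:
it is a `t`-best response to what the others are doing. -/
def Consistent {n : ℕ} {S : Fin n → Type*} [∀ i, Fintype (S i)] [∀ i, DecidableEq (S i)]
    (u : (∀ j, S j) → ℝ) (σ : ∀ j, S j → ℝ) (i : Fin n) (t : ℝ) (si : S i) : Prop :=
  ∀ si', devU u σ i si' ≤ devU u σ i si + t

/-- Nash equilibrium: every pure strategy in the support of `σ i` is a best response. -/
def NashEq {n : ℕ} {S : Fin n → Type*} [∀ i, Fintype (S i)] [∀ i, DecidableEq (S i)]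
    (u : Fin n → (∀ j, S j) → ℝ) (σ : ∀ j, S j → ℝ) : Prop :=
  (∀ i, IsMixed (σ i)) ∧
  ∀ i, ∀ si, 0 < σ i si → ∀ si', devU (u i) σ i si' ≤ devU (u i) σ i si

/-- `p` is a probability distribution on the finite set `T`. -/
def IsDist (T : Finset ℝ) (p : ℝ → ℝ) : Prop :=
  (∀ t ∈ T, 0 ≤ p t) ∧ ∑ t ∈ T, p t = 1

/-- π-tolerant equilibrium: for each player `i` there is a map `g` assigning to each
tolerance type `t ∈ T i` a mixed strategy whose support consists of `t`-best responses
to `σ₋ᵢ` (E1), such that the π-average of the `g t` is `σ i` (E2). -/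
def PiTolerantEq {n : ℕ} {S : Fin n → Type*} [∀ i, Fintype (S i)] [∀ i, DecidableEq (S i)]
    (u : Fin n → (∀ j, S j) → ℝ) (T : Fin n → Finset ℝ) (π : Fin n → ℝ → ℝ)
    (σ : ∀ j, S j → ℝ) : Prop :=
  (∀ i, IsMixed (σ i)) ∧
  ∀ i, ∃ g : ℝ → S i → ℝ,
    (∀ t ∈ T i, IsMixed (g t)) ∧
    (∀ t ∈ T i, ∀ si, 0 < g t si → Consistent (u i) σ i t si) ∧
    (∀ si, ∑ t ∈ T i, π i t * g t si = σ i si)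

/-- Cumulative distribution function of the distribution `p` on the finite set `T`. -/
noncomputable def cdf (T : Finset ℝ) (p : ℝ → ℝ) (t : ℝ) : ℝ :=
  ∑ t' ∈ T.filter (· ≤ t), p t'

/-! A π-tolerant equilibrium splits `σ i` as the π-mixture of the strategies `g t` of the tolerance
types `t`. When π' dominates π there is a coupling of π and π' that only moves mass upwards
(`t ≤ t'`): the quantile coupling, matching the types of π and of π' that occupy the same quantiles
of `[0, 1]`. Type `t'` of π' then plays the mixture of the strategies `g t` of the types coupled
with it; these are `t`-best responses with `t ≤ t'`, hence `t'`-best responses, and the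
π'-mixture of the new strategies is again `σ i`. -/

noncomputable def cdfLt (T : Finset ℝ) (p : ℝ → ℝ) (t : ℝ) : ℝ :=
  ∑ t' ∈ T.filter (· < t), p t'

section Cdf

variable {T : Finset ℝ} {p : ℝ → ℝ}

theorem cdf_eq_add_cdfLt {t : ℝ} (ht : t ∈ T) : cdf T p t = p t + cdfLt T p t := by
  have hsplit : T.filter (· ≤ t) = insert t (T.filter (· < t)) := by
    ext x
    simp only [mem_filter, mem_insert, le_iff_lt_or_eq]
    constructor
    · rintro ⟨hx, hlt | rfl⟩
      exacts [Or.inr ⟨hx, hlt⟩, Or.inl rfl]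
    · rintro (rfl | ⟨hx, hlt⟩)
      exacts [⟨ht, Or.inr rfl⟩, ⟨hx, Or.inl hlt⟩]
  rw [cdf, cdfLt, hsplit, sum_insert (by simp)]

theorem cdfLt_nonneg (hp : ∀ t ∈ T, 0 ≤ p t) (t : ℝ) : 0 ≤ cdfLt T p t :=
  sum_nonneg fun x hx => hp x (mem_of_mem_filter x hx)

theorem cdf_le_cdfLt_of_lt (hp : ∀ t ∈ T, 0 ≤ p t) {s t : ℝ} (hst : s < t) :
    cdf T p s ≤ cdfLt T p t :=
  sum_le_sum_of_subset_of_nonneg (monotone_filter_right _ fun _ _ hx => hx.trans_lt hst)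
    fun x hx _ => hp x (mem_of_mem_filter x hx)

theorem cdfLt_le_cdf (hp : ∀ t ∈ T, 0 ≤ p t) (t : ℝ) : cdfLt T p t ≤ cdf T p t :=
  sum_le_sum_of_subset_of_nonneg (monotone_filter_right _ fun _ _ hx => hx.le)
    fun x hx _ => hp x (mem_of_mem_filter x hx)

theorem cdf_le_one (hp : IsDist T p) (t : ℝ) : cdf T p t ≤ 1 :=
  hp.2 ▸ sum_le_sum_of_subset_of_nonneg (filter_subset _ _) fun x hx _ => hp.1 x hx

theorem sum_comp_cdf_sub_comp_cdfLt (f : ℝ → ℝ) :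
    ∑ t ∈ T, (f (cdf T p t) - f (cdfLt T p t)) = f (∑ t ∈ T, p t) - f 0 := by
  induction T using Finset.induction_on_max with
  | empty => simp
  | insert a s ha ih =>
    have has : a ∉ s := fun h => (ha a h).false
    have hcdf_a : cdf (insert a s) p a = ∑ t ∈ insert a s, p t := by
      rw [cdf, filter_true_of_mem]
      rintro t ht
      rcases mem_insert.mp ht with rfl | h
      exacts [le_rfl, (ha t h).le]
    have hcdfLt_a : cdfLt (insert a s) p a = ∑ t ∈ s, p t := by
      rw [cdfLt, filter_insert, if_neg (lt_irrefl a), filter_true_of_mem ha]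
    have hrest : ∀ t ∈ s, f (cdf (insert a s) p t) - f (cdfLt (insert a s) p t)
        = f (cdf s p t) - f (cdfLt s p t) := by
      intro t ht
      rw [cdf, cdfLt, filter_insert, filter_insert, if_neg (ha t ht).not_ge,
        if_neg (ha t ht).not_gt, cdf, cdfLt]
    rw [sum_insert has, sum_congr rfl hrest, ih, hcdf_a, hcdfLt_a, sum_insert has]
    ring

end Cdf

/-- The length of `[a, b] ∩ [c, d]` when `a ≤ b` and `c ≤ d`, written as the mass of the rectangle
`[a, b] × [c, d]` under the uniform distribution on the diagonal of the square, whose distribution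
function is `min`. In this form both marginal sums of a coupling built from it telescope. -/
def overlap (a b c d : ℝ) : ℝ :=
  min b d - min b c - min a d + min a c

theorem overlap_comm (a b c d : ℝ) : overlap a b c d = overlap c d a b := by
  simp only [overlap, min_comm a, min_comm b]
  ring

theorem overlap_nonneg {a b c d : ℝ} (hab : a ≤ b) (hcd : c ≤ d) : 0 ≤ overlap a b c d := by
  simp only [overlap, min_def]
  split_ifs <;> linarith

theorem overlap_eq_zero_of_le {a b c d : ℝ} (hab : a ≤ b) (hcd : c ≤ d) (hda : d ≤ a) :
    overlap a b c d = 0 := by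
  rw [overlap, min_eq_right (hda.trans hab), min_eq_right ((hcd.trans hda).trans hab),
    min_eq_right hda, min_eq_right (hcd.trans hda)]
  ring

theorem sum_overlap_cdf {T : Finset ℝ} {p : ℝ → ℝ} (hp : IsDist T p) {a b : ℝ} (ha : 0 ≤ a)
    (hab : a ≤ b) (hb : b ≤ 1) :
    ∑ t ∈ T, overlap a b (cdfLt T p t) (cdf T p t) = b - a := by
  have hjump : ∀ t ∈ T, overlap a b (cdfLt T p t) (cdf T p t)
      = (fun y => min b y - min a y) (cdf T p t) - (fun y => min b y - min a y) (cdfLt T p t) :=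
    fun t _ => by simp only [overlap]; ring
  rw [sum_congr rfl hjump, sum_comp_cdf_sub_comp_cdfLt (fun y => min b y - min a y), hp.2,
    min_eq_left hb, min_eq_left (hab.trans hb), min_eq_right (ha.trans hab), min_eq_right ha]
  ring

structure IsMonotoneCoupling (T : Finset ℝ) (π : ℝ → ℝ) (T' : Finset ℝ) (π' : ℝ → ℝ)
    (w : ℝ → ℝ → ℝ) : Prop where
  nonneg : ∀ t ∈ T, ∀ t' ∈ T', 0 ≤ w t t'
  sum_right : ∀ t ∈ T, ∑ t' ∈ T', w t t' = π t
  sum_left : ∀ t' ∈ T', ∑ t ∈ T, w t t' = π' t'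
  le_of_pos : ∀ t ∈ T, ∀ t' ∈ T', 0 < w t t' → t ≤ t'

theorem IsMonotoneCoupling.eq_zero_of_eq_zero {T T' : Finset ℝ} {π π' : ℝ → ℝ}
    {w : ℝ → ℝ → ℝ} (hw : IsMonotoneCoupling T π T' π' w) {t t' : ℝ} (ht : t ∈ T)
    (ht' : t' ∈ T') (h0 : π' t' = 0) : w t t' = 0 :=
  (sum_eq_zero_iff_of_nonneg fun s hs => hw.nonneg s hs t' ht').mp
    (h0 ▸ hw.sum_left t' ht') t ht

theorem IsMonotoneCoupling.right_nonneg {T T' : Finset ℝ} {π π' : ℝ → ℝ} {w : ℝ → ℝ → ℝ}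
    (hw : IsMonotoneCoupling T π T' π' w) {t' : ℝ} (ht' : t' ∈ T') : 0 ≤ π' t' :=
  hw.sum_left t' ht' ▸ sum_nonneg fun t ht => hw.nonneg t ht t' ht'

/-- The quantile coupling: `(t, t')` gets the overlap of the quantile intervals
`[cdfLt, cdf]` of `t` and of `t'`. Dominance puts the interval of `t'` to the left of that of
any `t > t'`. -/
theorem exists_isMonotoneCoupling {T T' : Finset ℝ} {π π' : ℝ → ℝ} (hπ : IsDist T π)
    (hπ' : IsDist T' π') (hdom : ∀ t, cdf T' π' t ≤ cdf T π t) :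
    ∃ w, IsMonotoneCoupling T π T' π' w := by
  have hlt := cdfLt_le_cdf hπ.1
  have hlt' := cdfLt_le_cdf hπ'.1
  refine ⟨fun t t' => overlap (cdfLt T π t) (cdf T π t) (cdfLt T' π' t') (cdf T' π' t'),
    fun t _ t' _ => overlap_nonneg (hlt t) (hlt' t'), fun t ht => ?_, fun t' ht' => ?_,
    fun t _ t' _ hpos => ?_⟩
  · rw [sum_overlap_cdf hπ' (cdfLt_nonneg hπ.1 t) (hlt t) (cdf_le_one hπ t),
      cdf_eq_add_cdfLt ht]
    ring
  · simp only [overlap_comm (cdfLt T π _)]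
    rw [sum_overlap_cdf hπ (cdfLt_nonneg hπ'.1 t') (hlt' t') (cdf_le_one hπ' t'),
      cdf_eq_add_cdfLt ht']
    ring
  · by_contra! hlt_t
    refine hpos.ne' (overlap_eq_zero_of_le (hlt t) (hlt' t') ?_)
    exact (hdom t').trans (cdf_le_cdfLt_of_lt hπ.1 hlt_t)

theorem isMixed_pureStrat {α : Type*} [Fintype α] [DecidableEq α] (a : α) :
    IsMixed (pureStrat a) :=
  ⟨fun b => by unfold pureStrat; split_ifs <;> norm_num, by simp [pureStrat]⟩

theorem IsMixed.nonempty {α : Type*} [Fintype α] {p : α → ℝ} (hp : IsMixed p) : Nonempty α := by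
  by_contra h
  simpa [not_nonempty_iff.mp h] using hp.2

section Transport

variable {α : Type*} [DecidableEq α] {T T' : Finset ℝ} {π π' : ℝ → ℝ}
  {w : ℝ → ℝ → ℝ} {g : ℝ → α → ℝ} {a₀ : α}

/-- Type `t'` plays the mixture of the strategies `g t` weighted by the conditional law of `t`
given `t'` under `w`; types of probability zero play `a₀`. -/
noncomputable def transport (T : Finset ℝ) (π' : ℝ → ℝ) (w : ℝ → ℝ → ℝ) (g : ℝ → α → ℝ)
    (a₀ : α) (t' : ℝ) (a : α) : ℝ :=
  if π' t' = 0 then pureStrat a₀ a else (∑ t ∈ T, w t t' * g t a) / π' t'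

theorem mul_transport (hw : IsMonotoneCoupling T π T' π' w) {t' : ℝ} (ht' : t' ∈ T') (a : α) :
    π' t' * transport T π' w g a₀ t' a = ∑ t ∈ T, w t t' * g t a := by
  unfold transport
  split_ifs with h0
  · rw [h0, zero_mul, sum_eq_zero fun t ht => by rw [hw.eq_zero_of_eq_zero ht ht' h0, zero_mul]]
  · exact mul_div_cancel₀ _ h0

theorem isMixed_transport [Fintype α] (hw : IsMonotoneCoupling T π T' π' w)
    (hg : ∀ t ∈ T, IsMixed (g t)) {t' : ℝ} (ht' : t' ∈ T') :
    IsMixed (transport T π' w g a₀ t') := by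
  unfold transport
  split_ifs with h0
  · exact isMixed_pureStrat a₀
  have hpos : 0 < π' t' := (hw.right_nonneg ht').lt_of_ne' h0
  refine ⟨fun a => div_nonneg (sum_nonneg fun t ht => mul_nonneg (hw.nonneg t ht t' ht')
    ((hg t ht).1 a)) hpos.le, ?_⟩
  calc ∑ a, (∑ t ∈ T, w t t' * g t a) / π' t'
      = (∑ t ∈ T, w t t' * ∑ a, g t a) / π' t' := by
        rw [← sum_div, sum_comm]
        simp only [mul_sum]
    _ = (∑ t ∈ T, w t t') / π' t' := by
        rw [sum_congr rfl fun t ht => by rw [(hg t ht).2, mul_one]]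
    _ = 1 := by rw [hw.sum_left t' ht', div_self h0]

theorem transport_pos_imp [Fintype α] {P : ℝ → α → Prop}
    (hP : ∀ {t t' a}, t ≤ t' → P t a → P t' a) (hw : IsMonotoneCoupling T π T' π' w)
    (hg : ∀ t ∈ T, IsMixed (g t)) (hgP : ∀ t ∈ T, ∀ a, 0 < g t a → P t a) {t' : ℝ}
    (ht' : t' ∈ T') (ha₀ : P t' a₀) {a : α} (hpos : 0 < transport T π' w g a₀ t' a) : P t' a := by
  unfold transport at hpos
  split_ifs at hpos with h0
  · by_cases ha : a = a₀
    · exact ha ▸ ha₀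
    · simp [pureStrat, ha] at hpos
  have hsum : 0 < ∑ t ∈ T, w t t' * g t a :=
    (div_pos_iff_of_pos_right ((hw.right_nonneg ht').lt_of_ne' h0)).mp hpos
  obtain ⟨t, ht, hwg⟩ := exists_lt_of_sum_lt (s := T) (f := fun _ => 0)
    (g := fun t => w t t' * g t a) (by rwa [sum_const_zero])
  exact hP (hw.le_of_pos t ht t' ht' (pos_of_mul_pos_left hwg ((hg t ht).1 a)))
    (hgP t ht a (pos_of_mul_pos_right hwg (hw.nonneg t ht t' ht')))

theorem sum_mul_transport (hw : IsMonotoneCoupling T π T' π' w) {σ : α → ℝ}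
    (hg : ∀ a, ∑ t ∈ T, π t * g t a = σ a) (a : α) :
    ∑ t' ∈ T', π' t' * transport T π' w g a₀ t' a = σ a := by
  rw [sum_congr rfl fun t' ht' => mul_transport hw ht' a, sum_comm, ← hg a]
  exact sum_congr rfl fun t ht => by rw [← sum_mul, hw.sum_right t ht]

end Transport

section Consistent

variable {n : ℕ} {S : Fin n → Type*} [∀ i, Fintype (S i)] [∀ i, DecidableEq (S i)]
  {u : (∀ j, S j) → ℝ} {σ : ∀ j, S j → ℝ} {i : Fin n}

theorem Consistent.mono {t t' : ℝ} {si : S i} (h : Consistent u σ i t si) (htt' : t ≤ t') :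
    Consistent u σ i t' si :=
  fun si' => (h si').trans (by linarith)

theorem exists_consistent_zero [Nonempty (S i)] : ∃ si, Consistent u σ i 0 si := by
  obtain ⟨si, hsi⟩ := Finite.exists_max (devU u σ i)
  exact ⟨si, fun si' => by simpa using hsi si'⟩

end Consistent

theorem stochDom_piTolerant_general {n : ℕ} {S : Fin n → Type*}
    [∀ i, Fintype (S i)] [∀ i, DecidableEq (S i)]
    (u : Fin n → (∀ j, S j) → ℝ) (σ : ∀ j, S j → ℝ)
    (T T' : Fin n → Finset ℝ) (π π' : Fin n → ℝ → ℝ)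
    (hT'nonneg : ∀ i, ∀ t ∈ T' i, 0 ≤ t)
    (hπ : ∀ i, IsDist (T i) (π i)) (hπ' : ∀ i, IsDist (T' i) (π' i))
    (hDom : ∀ i, ∀ t : ℝ, cdf (T' i) (π' i) t ≤ cdf (T i) (π i) t)
    (hEq : PiTolerantEq u T π σ) :
    PiTolerantEq u T' π' σ := by
  obtain ⟨hmix, hdecomp⟩ := hEq
  refine ⟨hmix, fun i => ?_⟩
  obtain ⟨g, hg, hg_consistent, hg_avg⟩ := hdecomp i
  obtain ⟨w, hw⟩ := exists_isMonotoneCoupling (hπ i) (hπ' i) (hDom i)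
  have := (hmix i).nonempty
  obtain ⟨a₀, ha₀⟩ := exists_consistent_zero (u := u i) (σ := σ) (i := i)
  refine ⟨transport (T i) (π' i) w g a₀, fun t' ht' => isMixed_transport hw hg ht',
    fun t' ht' si hpos => transport_pos_imp (fun htt' h => h.mono htt') hw hg hg_consistent ht'
      (ha₀.mono (hT'nonneg i t' ht')) hpos, sum_mul_transport hw hg_avg⟩

/-- If π' stochastically dominates π, then every π-tolerant equilibrium is a
π'-tolerant equilibrium. -/
theorem stochDom_piTolerant {n : ℕ} {S : Fin n → Type*}
    [∀ i, Fintype (S i)] [∀ i, DecidableEq (S i)]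
    (u : Fin n → (∀ j, S j) → ℝ) (σ : ∀ j, S j → ℝ)
    (T T' : Fin n → Finset ℝ) (π π' : Fin n → ℝ → ℝ)
    (hT : ∀ i, (T i).Nonempty) (hT' : ∀ i, (T' i).Nonempty)
    (hTnonneg : ∀ i, ∀ t ∈ T i, 0 ≤ t) (hT'nonneg : ∀ i, ∀ t ∈ T' i, 0 ≤ t)
    (hπ : ∀ i, IsDist (T i) (π i)) (hπ' : ∀ i, IsDist (T' i) (π' i))
    (hDom : ∀ i, ∀ t : ℝ, cdf (T' i) (π' i) t ≤ cdf (T i) (π i) t)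
    (hEq : PiTolerantEq u T π σ) :
    PiTolerantEq u T' π' σ :=
  stochDom_piTolerant_general u σ T T' π π' hT'nonneg hπ hπ' hDom hEq
end

section
/- In the Traveler's Dilemma with claims in {L, L+1, ..., H} (integers L < H) and bonus/penalty b ≥ 1, cooperation (claiming H) is consistent with tolerance t against any mixed strategy of the other player whenever t ≥ 2b - 1. -/
/-!
Against an opponent claiming `m'`, no claim earns more than `m' + b - 1` (undercutting by one),
while claiming `H` always earns at least `m' - b`. So cooperation loses at most `2b - 1` against
every pure strategy of the opponent, hence also against every mixture of them.
-/

open Finset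

/-- Payoff in the Traveler's Dilemma, with bonus/penalty `b`, to a player claiming `m`
against an opponent claiming `m'`. -/
def tdPay (b m m' : ℤ) : ℝ :=
  if m = m' then (m : ℝ) else if m < m' then (m : ℝ) + (b : ℝ) else (m' : ℝ) - (b : ℝ)

theorem Finset.sum_mul_le_sum_mul_add {ι R : Type*} [CommSemiring R] [PartialOrder R]
    [IsOrderedRing R] {s : Finset ι} {σ f g : ι → R} {c : R} (hσ0 : ∀ i ∈ s, 0 ≤ σ i)
    (hσ1 : ∑ i ∈ s, σ i = 1) (hfg : ∀ i ∈ s, f i ≤ g i + c) :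
    ∑ i ∈ s, σ i * f i ≤ ∑ i ∈ s, σ i * g i + c :=
  calc ∑ i ∈ s, σ i * f i
      ≤ ∑ i ∈ s, σ i * (g i + c) :=
        sum_le_sum fun i hi => mul_le_mul_of_nonneg_left (hfg i hi) (hσ0 i hi)
    _ = ∑ i ∈ s, σ i * g i + c := by
        simp only [mul_add, sum_add_distrib, ← sum_mul, hσ1, one_mul]

theorem tdPay_le_add_sub_one {b : ℤ} (hb : 1 ≤ b) (m m' : ℤ) :
    tdPay b m m' ≤ m' + b - 1 := by
  have hb' : (1 : ℝ) ≤ b := by exact_mod_cast hb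
  unfold tdPay
  split_ifs with heq hlt
  · subst heq; linarith
  · have : (m : ℝ) + 1 ≤ m' := by exact_mod_cast hlt
    linarith
  · linarith

theorem sub_le_tdPay_of_le {b H m' : ℤ} (hb : 0 ≤ b) (hm' : m' ≤ H) :
    (m' : ℝ) - b ≤ tdPay b H m' := by
  have hb' : (0 : ℝ) ≤ b := by exact_mod_cast hb
  have hm'' : (m' : ℝ) ≤ H := by exact_mod_cast hm'
  unfold tdPay
  split_ifs with heq hlt
  · linarith
  · omega
  · exact le_rfl

theorem td_cooperation_consistent_of_ge_general (L H b : ℤ) (t : ℝ)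
    (hb : 1 ≤ b)
    (σ : ℤ → ℝ) (hσ0 : ∀ m ∈ Finset.Icc L H, 0 ≤ σ m)
    (hσ1 : ∑ m ∈ Finset.Icc L H, σ m = 1)
    (ht : 2 * (b : ℝ) - 1 ≤ t) :
    ∀ m ∈ Finset.Icc L H,
      ∑ m' ∈ Finset.Icc L H, σ m' * tdPay b m m' ≤
        (∑ m' ∈ Finset.Icc L H, σ m' * tdPay b H m') + t := by
  intro m _
  refine sum_mul_le_sum_mul_add hσ0 hσ1 fun m' hm' => ?_
  have best := tdPay_le_add_sub_one hb m m'
  have coop := sub_le_tdPay_of_le (b := b) (by omega) (mem_Icc.mp hm').2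
  linarith

/-- In the Traveler's Dilemma with claims in `[L,H]` and bonus `b ≥ 1`, cooperation
(claiming `H`) is consistent with tolerance `t` against any mixed strategy of the
other player whenever `t ≥ 2b - 1`. -/
theorem td_cooperation_consistent_of_ge (L H b : ℤ) (t : ℝ)
    (hLH : L < H) (hb : 1 ≤ b)
    (σ : ℤ → ℝ) (hσ0 : ∀ m ∈ Finset.Icc L H, 0 ≤ σ m)
    (hσ1 : ∑ m ∈ Finset.Icc L H, σ m = 1)
    (ht : 2 * (b : ℝ) - 1 ≤ t) :
    ∀ m ∈ Finset.Icc L H,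
      ∑ m' ∈ Finset.Icc L H, σ m' * tdPay b m m' ≤
        (∑ m' ∈ Finset.Icc L H, σ m' * tdPay b H m') + t :=
  td_cooperation_consistent_of_ge_general L H b t hb σ hσ0 hσ1 ht
end

section
/- In the Traveler's Dilemma, cooperation (claiming H) is consistent with type (t, β) — i.e., against an opponent who claims H with probability β and L with probability 1-β — if and only if t ≥ max(β(b-1), b - β(H-L)). -/
/-- Expected payoff of claiming `m` against an opponent who claims `H` with
probability `β` and `L` with probability `1 - β`. -/
def tdBeliefEP (L H b : ℤ) (β : ℝ) (m : ℤ) : ℝ :=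
  β * tdPay b m H + (1 - β) * tdPay b m L

/-!
Against the belief `β`, cooperating (claiming `H`) falls short of claiming `L` by
`b - β (H - L)` and of claiming an interior `m` by `β (m + b - H)`, which is largest at
`m = H - 1`. So the largest shortfall over all claims is `max (β (b - 1)) (b - β (H - L))`;
when `H = L + 1` there is no interior claim, but then `β ≤ 1` makes the first term the smaller.
-/

section tdPay

variable {b m m' : ℤ}

@[simp]
lemma tdPay_self (b m : ℤ) : tdPay b m m = m := by
  simp [tdPay]

lemma tdPay_of_lt (h : m < m') : tdPay b m m' = m + b := by
  simp [tdPay, h.ne, h]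

lemma tdPay_of_gt (h : m' < m) : tdPay b m m' = m' - b := by
  simp [tdPay, h.ne', h.not_gt]

end tdPay

section tdBeliefEP

variable {L H b m : ℤ} {β : ℝ}

lemma tdBeliefEP_low_sub_high (hLH : L < H) :
    tdBeliefEP L H b β L - tdBeliefEP L H b β H = b - β * (H - L) := by
  simp only [tdBeliefEP, tdPay_self, tdPay_of_lt hLH, tdPay_of_gt hLH]
  ring

lemma tdBeliefEP_sub_high_of_mem_Ioo (hLm : L < m) (hmH : m < H) :
    tdBeliefEP L H b β m - tdBeliefEP L H b β H = β * (m + b - H) := by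
  simp only [tdBeliefEP, tdPay_self, tdPay_of_lt hmH, tdPay_of_gt hLm,
    tdPay_of_gt (hLm.trans hmH)]
  ring

lemma tdBeliefEP_sub_high_le_max (hb : 1 ≤ b) (hβ0 : 0 ≤ β) (hm : m ∈ Set.Icc L H) :
    tdBeliefEP L H b β m - tdBeliefEP L H b β H ≤
      max (β * ((b : ℝ) - 1)) ((b : ℝ) - β * ((H : ℝ) - (L : ℝ))) := by
  have hb' : (1 : ℝ) ≤ b := by exact_mod_cast hb
  obtain ⟨hLm, hmH⟩ := hm
  rcases hmH.eq_or_lt with rfl | hmH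
  · rw [sub_self]
    exact le_max_of_le_left (by nlinarith)
  rcases hLm.eq_or_lt with rfl | hLm
  · exact (tdBeliefEP_low_sub_high hmH).le.trans (le_max_right _ _)
  · have hm' : (m : ℝ) ≤ H - 1 := by exact_mod_cast Int.le_sub_one_of_lt hmH
    rw [tdBeliefEP_sub_high_of_mem_Ioo hLm hmH]
    exact le_max_of_le_left (by nlinarith)

lemma exists_tdBeliefEP_sub_high_eq_max (hLH : L < H) (hb : 0 ≤ b) (hβ1 : β ≤ 1) :
    ∃ m ∈ Set.Icc L H, tdBeliefEP L H b β m - tdBeliefEP L H b β H =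
      max (β * ((b : ℝ) - 1)) ((b : ℝ) - β * ((H : ℝ) - (L : ℝ))) := by
  have hL : L ∈ Set.Icc L H := ⟨le_rfl, hLH.le⟩
  rcases le_total (β * ((b : ℝ) - 1)) ((b : ℝ) - β * ((H : ℝ) - (L : ℝ))) with hle | hle
  · exact ⟨L, hL, by rw [tdBeliefEP_low_sub_high hLH, max_eq_right hle]⟩
  rw [max_eq_left hle]
  rcases (Int.add_one_le_of_lt hLH).eq_or_lt with hH | hLH1
  · have hH' : (H : ℝ) = L + 1 := by exact_mod_cast hH.symm
    have hb' : (0 : ℝ) ≤ b := by exact_mod_cast hb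
    refine ⟨L, hL, ?_⟩
    rw [tdBeliefEP_low_sub_high hLH]
    nlinarith [mul_nonneg (sub_nonneg.mpr hβ1) hb']
  · refine ⟨H - 1, ⟨by omega, by omega⟩, ?_⟩
    rw [tdBeliefEP_sub_high_of_mem_Ioo (by omega) (by omega)]
    push_cast
    ring

end tdBeliefEP

/-- In the Traveler's Dilemma, cooperation (claiming `H`) is consistent with type
`(t, β)` iff `t ≥ max(β(b-1), b - β(H-L))`. -/
theorem td_type_consistent_iff (L H b : ℤ) (t β : ℝ)
    (hLH : L < H) (hb : 1 ≤ b) (hβ0 : 0 ≤ β) (hβ1 : β ≤ 1) :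
    (∀ m ∈ Finset.Icc L H, tdBeliefEP L H b β m ≤ tdBeliefEP L H b β H + t) ↔
      max (β * ((b : ℝ) - 1)) ((b : ℝ) - β * ((H : ℝ) - (L : ℝ))) ≤ t := by
  simp only [Finset.mem_Icc, ← sub_le_iff_le_add']
  constructor
  · intro h
    obtain ⟨m, hm, hmax⟩ := exists_tdBeliefEP_sub_high_eq_max hLH (zero_le_one.trans hb) hβ1
    exact hmax ▸ h m hm
  · intro h m hm
    exact (tdBeliefEP_sub_high_le_max hb hβ0 hm).trans h
end

section
/- In the Public Goods game with N ≥ 2 players, endowment 1, and marginal return ρ ∈ (1/N, 1), cooperation (contributing the full endowment) is consistent with tolerance t against any strategies of the other players if and only if t ≥ 1 - ρ. -/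
/-- Payoff to player `i` in the Public Goods game with marginal return `ρ`, when `i`
contributes `xi` and the others contribute according to `x`. -/
def pgPay {N : ℕ} (ρ : ℝ) (i : Fin N) (xi : ℝ) (x : Fin N → ℝ) : ℝ :=
  1 - xi + ρ * (xi + ∑ j ∈ Finset.univ.erase i, x j)

theorem pgPay_sub_pgPay {N : ℕ} (ρ : ℝ) (i : Fin N) (a b : ℝ) (x : Fin N → ℝ) :
    pgPay ρ i a x - pgPay ρ i b x = (1 - ρ) * (b - a) := by
  unfold pgPay
  ring

theorem pg_cooperation_consistent_iff_general (N : ℕ) (ρ t : ℝ)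
    (hρ2 : ρ < 1)
    (i : Fin N) (x : Fin N → ℝ) :
    (∀ x' : ℝ, 0 ≤ x' → x' ≤ 1 → pgPay ρ i x' x ≤ pgPay ρ i 1 x + t) ↔ 1 - ρ ≤ t := by
  constructor
  · intro h
    linarith [h 0 le_rfl zero_le_one, pgPay_sub_pgPay ρ i 0 1 x]
  · intro ht x' hx0 hx1
    calc pgPay ρ i x' x = pgPay ρ i 1 x + (1 - ρ) * (1 - x') := by
          linarith [pgPay_sub_pgPay ρ i x' 1 x]
      _ ≤ pgPay ρ i 1 x + (1 - ρ) := by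
          gcongr
          exact mul_le_of_le_one_right (by linarith) (by linarith)
      _ ≤ pgPay ρ i 1 x + t := by gcongr

/-- In the Public Goods game with `N ≥ 2` players and marginal return `ρ ∈ (1/N, 1)`,
cooperation (contributing the full endowment 1) is consistent with tolerance `t`,
against any strategies of the other players, iff `t ≥ 1 - ρ`. -/
theorem pg_cooperation_consistent_iff (N : ℕ) (hN : 2 ≤ N) (ρ t : ℝ)
    (hρ1 : 1 / (N : ℝ) < ρ) (hρ2 : ρ < 1)
    (i : Fin N) (x : Fin N → ℝ) (hx : ∀ j, 0 ≤ x j ∧ x j ≤ 1) :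
    (∀ x' : ℝ, 0 ≤ x' → x' ≤ 1 → pgPay ρ i x' x ≤ pgPay ρ i 1 x + t) ↔ 1 - ρ ≤ t :=
  pg_cooperation_consistent_iff_general N ρ t hρ2 i x
end

section
/- In Bertrand Competition with n players, prices in {L,...,H} with 2 ≤ L < H, cooperation (pricing at H) is consistent with type (t,β) if and only if t ≥ max(β^{n-1}(H-1), f(n)·L) - β^{n-1}·H/n, where f(n) = Σ_{k=0}^{n-1} β^k (1-β)^{n-1-k} C(n-1,k)/(n-k). -/
open Finset

/-- The quantity `f(n) = Σ_{k=0}^{n-1} β^k (1-β)^{n-1-k} C(n-1,k)/(n-k)`: the expected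
share factor from pricing at the floor `L` when each of the `n-1` other firms
independently prices high with probability `β`. -/
noncomputable def bertF (n : ℕ) (β : ℝ) : ℝ :=
  ∑ k ∈ Finset.range n, β ^ k * (1 - β) ^ (n - 1 - k) * ((n - 1).choose k : ℝ) / ((n : ℝ) - (k : ℝ))

/-- Expected payoff in Bertrand Competition from pricing at `p ∈ [L,H]`, against `n-1`
other firms that each independently price at `H` with probability `β` and at `L`
with probability `1-β`. -/
noncomputable def bertEP (n L H : ℕ) (β : ℝ) (p : ℕ) : ℝ :=
  if p = L then bertF n β * (L : ℝ)
  else if p = H then β ^ (n - 1) * (H : ℝ) / (n : ℝ)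
  else β ^ (n - 1) * (p : ℝ)

/-!
The best deviation from `H` is either `L` or the undercut `H - 1`: an interior price `p` earns
`β^{n-1} p ≤ β^{n-1} (H - 1)`, and sharing at `H` earns `β^{n-1} H / n ≤ β^{n-1} (H - 1)` once
`n, H ≥ 2`. When `H - 1 = L` the undercut is not available, but then its payoff `β^{n-1} L` is
still dominated by `f(n) L`, because `β^{n-1}` is the `k = n - 1` term of `f(n)` and all terms are
nonnegative for `β ∈ [0, 1]`. Hence `max(β^{n-1}(H-1), f(n) L)` is the largest payoff over
`{L, …, H}`.
-/

theorem mul_div_le_mul_sub_one {c x m : ℝ} (hc : 0 ≤ c) (hx : 2 ≤ x) (hm : 2 ≤ m) :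
    c * x / m ≤ c * (x - 1) := by
  rw [mul_div_assoc]
  refine mul_le_mul_of_nonneg_left ?_ hc
  rw [div_le_iff₀ (by linarith)]
  nlinarith

section

variable {n L H : ℕ} {β : ℝ}

theorem pow_pred_le_bertF (hn : 1 ≤ n) (hβ0 : 0 ≤ β) (hβ1 : β ≤ 1) :
    β ^ (n - 1) ≤ bertF n β := by
  have hterm_nonneg : ∀ k ∈ range n,
      0 ≤ β ^ k * (1 - β) ^ (n - 1 - k) * ((n - 1).choose k : ℝ) / ((n : ℝ) - (k : ℝ)) := by
    intro k hk
    have hkn : (k : ℝ) < n := by exact_mod_cast mem_range.mp hk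
    have h1β : 0 ≤ 1 - β := by linarith
    exact div_nonneg (by positivity) (by linarith)
  have hlast : β ^ (n - 1) * (1 - β) ^ (n - 1 - (n - 1)) * ((n - 1).choose (n - 1) : ℝ)
      / ((n : ℝ) - ((n - 1 : ℕ) : ℝ)) = β ^ (n - 1) := by
    rw [Nat.sub_self, Nat.choose_self, Nat.cast_sub hn]
    simp
  rw [← hlast]
  exact single_le_sum hterm_nonneg (mem_range.mpr (by omega))

theorem bertEP_low : bertEP n L H β L = bertF n β * L := by
  simp [bertEP]

theorem bertEP_high (hHL : H ≠ L) : bertEP n L H β H = β ^ (n - 1) * H / n := by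
  simp [bertEP, hHL]

theorem bertEP_of_ne {p : ℕ} (hpL : p ≠ L) (hpH : p ≠ H) : bertEP n L H β p = β ^ (n - 1) * p := by
  simp [bertEP, hpL, hpH]

theorem bertEP_le_max (hn : 2 ≤ n) (hH : 2 ≤ H) (hβ0 : 0 ≤ β) {p : ℕ} (hp : p ≤ H) :
    bertEP n L H β p ≤ max (β ^ (n - 1) * ((H : ℝ) - 1)) (bertF n β * L) := by
  by_cases hpL : p = L
  · rw [hpL, bertEP_low]
    exact le_max_right _ _
  refine le_max_of_le_left ?_
  by_cases hpH : p = H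
  · rw [hpH, bertEP_high (by omega)]
    exact mul_div_le_mul_sub_one (pow_nonneg hβ0 _) (by exact_mod_cast hH) (by exact_mod_cast hn)
  · rw [bertEP_of_ne hpL hpH]
    have hp' : (p : ℝ) + 1 ≤ H := by exact_mod_cast (by omega : p + 1 ≤ H)
    exact mul_le_mul_of_nonneg_left (by linarith) (pow_nonneg hβ0 _)

theorem forall_bertEP_le_iff (hn : 2 ≤ n) (hL : 1 ≤ L) (hLH : L < H) (hβ0 : 0 ≤ β) (hβ1 : β ≤ 1)
    (c : ℝ) : (∀ p ∈ Icc L H, bertEP n L H β p ≤ c) ↔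
      max (β ^ (n - 1) * ((H : ℝ) - 1)) (bertF n β * L) ≤ c := by
  constructor
  · intro h
    have hlow : bertF n β * L ≤ c := bertEP_low (H := H) ▸ h L (mem_Icc.mpr ⟨le_rfl, hLH.le⟩)
    refine max_le ?_ hlow
    rcases eq_or_ne (H - 1) L with hHL | hHL
    · have hcast : (H : ℝ) - 1 = L := by rw [← hHL, Nat.cast_sub (by omega)]; simp
      rw [hcast]
      exact (mul_le_mul_of_nonneg_right (pow_pred_le_bertF (by omega) hβ0 hβ1)
        (Nat.cast_nonneg L)).trans hlow
    · have hundercut := h (H - 1) (mem_Icc.mpr ⟨by omega, by omega⟩)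
      rwa [bertEP_of_ne hHL (by omega), Nat.cast_sub (by omega), Nat.cast_one] at hundercut
  · intro h p hp
    exact (bertEP_le_max hn (by omega) hβ0 (mem_Icc.mp hp).2).trans h

end

/-- In Bertrand Competition with `n ≥ 2` players and prices in `{L,...,H}`, `2 ≤ L < H`,
cooperation (pricing at `H`) is consistent with type `(t,β)` iff
`t ≥ max(β^{n-1}(H-1), f(n)·L) - β^{n-1}·H/n`. -/
theorem bertrand_cooperation_consistent_iff (n L H : ℕ) (t β : ℝ)
    (hn : 2 ≤ n) (hL : 2 ≤ L) (hLH : L < H) (hβ0 : 0 ≤ β) (hβ1 : β ≤ 1) :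
    (∀ p ∈ Finset.Icc L H, bertEP n L H β p ≤ bertEP n L H β H + t) ↔
      max (β ^ (n - 1) * ((H : ℝ) - 1)) (bertF n β * (L : ℝ))
        - β ^ (n - 1) * (H : ℝ) / (n : ℝ) ≤ t := by
  rw [forall_bertEP_le_iff hn (by omega) hLH hβ0 hβ1, bertEP_high hLH.ne']
  exact sub_le_iff_le_add'.symm
end

section
/- If ΔC ≤ ΔD, multiple solutions to 1 - α = F(αΔC + (1-α)ΔD) may exist: there exist positive reals ΔC < ΔD and a continuous nondecreasing CDF F : ℝ → [0,1] such that the equation 1 - α = F(αΔC + (1-α)ΔD) has at least two distinct solutions in [0,1]. -/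
/-! If `F` is the CDF of the uniform distribution on `[ΔC, ΔD]`, then
`F (α * ΔC + (1 - α) * ΔD) = 1 - α` for every `α ∈ [0, 1]`: the whole interval consists of
solutions. -/

open Set

noncomputable def uniformCDF (a b x : ℝ) : ℝ :=
  projIcc 0 1 zero_le_one ((x - a) / (b - a))

theorem uniformCDF_mem_Icc (a b x : ℝ) : uniformCDF a b x ∈ Icc (0 : ℝ) 1 :=
  Subtype.prop _

theorem continuous_uniformCDF (a b : ℝ) : Continuous (uniformCDF a b) :=
  continuous_subtype_val.comp <| continuous_projIcc.comp <| by fun_prop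

theorem monotone_uniformCDF {a b : ℝ} (hab : a ≤ b) : Monotone (uniformCDF a b) :=
  fun _ _ hxy => Subtype.mono_coe _ <| monotone_projIcc _ <|
    div_le_div_of_nonneg_right (sub_le_sub_right hxy a) (sub_nonneg.2 hab)

theorem uniformCDF_convexCombination {a b α : ℝ} (hab : a < b) (hα : α ∈ Icc (0 : ℝ) 1) :
    uniformCDF a b (α * a + (1 - α) * b) = 1 - α := by
  have hscaled : (α * a + (1 - α) * b - a) / (b - a) = 1 - α := by
    field_simp [(sub_pos.2 hab).ne']
    ring
  have hmem : 1 - α ∈ Icc (0 : ℝ) 1 := ⟨by linarith [hα.2], by linarith [hα.1]⟩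
  rw [uniformCDF, hscaled, projIcc_of_mem _ hmem]

/-- When `ΔC ≤ ΔD`, multiple symmetric particularly cooperative equilibria may exist:
there are `0 < ΔC < ΔD` and a continuous nondecreasing CDF `F` for which the equation
`1 - α = F(αΔC + (1-α)ΔD)` has at least two distinct solutions in `[0,1]`. -/
theorem multiple_equilibria_possible :
    ∃ (ΔC ΔD : ℝ) (F : ℝ → ℝ), 0 < ΔC ∧ ΔC < ΔD ∧
      Continuous F ∧ Monotone F ∧ (∀ x, 0 ≤ F x ∧ F x ≤ 1) ∧
      ∃ α β : ℝ, α ∈ Set.Icc (0 : ℝ) 1 ∧ β ∈ Set.Icc (0 : ℝ) 1 ∧ α ≠ β ∧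
        1 - α = F (α * ΔC + (1 - α) * ΔD) ∧ 1 - β = F (β * ΔC + (1 - β) * ΔD) := by
  have h0 : (0 : ℝ) ∈ Icc (0 : ℝ) 1 := left_mem_Icc.2 zero_le_one
  have h1 : (1 : ℝ) ∈ Icc (0 : ℝ) 1 := right_mem_Icc.2 zero_le_one
  exact ⟨1, 2, uniformCDF 1 2, one_pos, one_lt_two, continuous_uniformCDF 1 2,
    monotone_uniformCDF one_le_two, uniformCDF_mem_Icc 1 2, 0, 1, h0, h1, zero_ne_one,
    (uniformCDF_convexCombination one_lt_two h0).symm,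
    (uniformCDF_convexCombination one_lt_two h1).symm⟩
end

section
/- Comparative statics in ΔC and ΔD: suppose F is a continuous nondecreasing CDF and ΔC > ΔD > 0, and let α*(ΔC, ΔD) denote the unique solution of 1 - α = F(αΔC + (1-α)ΔD). If ΔC' ≥ ΔC and ΔD' ≥ ΔD with ΔC' > ΔD', then α*(ΔC', ΔD') ≤ α*(ΔC, ΔD). (The equilibrium probability of cooperation decreases as ΔC and ΔD increase.) -/
/-! A larger solution `α'` would raise the argument `α ΔC + (1 - α) ΔD` of `F` twice over:
once through the weight, since `ΔD < ΔC`, and once through the larger gains. As `F` is monotone,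
this gives `1 - α ≤ 1 - α'`, a contradiction. -/

open Set

def mixedGain (ΔC ΔD a : ℝ) : ℝ := a * ΔC + (1 - a) * ΔD

lemma mixedGain_monotone {ΔC ΔD : ℝ} (h : ΔD ≤ ΔC) : Monotone (mixedGain ΔC ΔD) := by
  intro a b hab
  have : mixedGain ΔC ΔD b - mixedGain ΔC ΔD a = (b - a) * (ΔC - ΔD) := by
    unfold mixedGain; ring
  rw [← sub_nonneg, this]
  exact mul_nonneg (sub_nonneg.2 hab) (sub_nonneg.2 h)

lemma mixedGain_le_mixedGain {ΔC ΔD ΔC' ΔD' a : ℝ} (ha : a ∈ Icc (0 : ℝ) 1)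
    (hC : ΔC ≤ ΔC') (hD : ΔD ≤ ΔD') : mixedGain ΔC ΔD a ≤ mixedGain ΔC' ΔD' a := by
  have : 0 ≤ 1 - a := sub_nonneg.2 ha.2
  unfold mixedGain
  gcongr
  exact ha.1

lemma le_of_one_sub_eq_of_monotone {H H' : ℝ → ℝ} {α α' : ℝ} (hH : Monotone H)
    (hHH' : H α' ≤ H' α') (heq : 1 - α = H α) (heq' : 1 - α' = H' α') : α' ≤ α := by
  by_contra! h
  linarith [hH h.le]

theorem comparative_statics_gains_general (F : ℝ → ℝ) (ΔC ΔD ΔC' ΔD' α α' : ℝ)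
    (hFmono : Monotone F)
    (hΔ : ΔD < ΔC) (hC : ΔC ≤ ΔC') (hD : ΔD ≤ ΔD')
    (hα' : α' ∈ Set.Icc (0 : ℝ) 1)
    (heq : 1 - α = F (α * ΔC + (1 - α) * ΔD))
    (heq' : 1 - α' = F (α' * ΔC' + (1 - α') * ΔD')) :
    α' ≤ α :=
  le_of_one_sub_eq_of_monotone (H := F ∘ mixedGain ΔC ΔD) (H' := F ∘ mixedGain ΔC' ΔD')
    (hFmono.comp (mixedGain_monotone hΔ.le))
    (hFmono (mixedGain_le_mixedGain hα' hC hD)) heq heq'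

/-- Comparative statics: the equilibrium probability of cooperation decreases as
`ΔC` and `ΔD` increase. If `α` solves `1 - α = F(αΔC + (1-α)ΔD)` and `α'` solves the
equation with larger gains `ΔC' ≥ ΔC`, `ΔD' ≥ ΔD` (with `ΔC' > ΔD'`), then `α' ≤ α`. -/
theorem comparative_statics_gains (F : ℝ → ℝ) (ΔC ΔD ΔC' ΔD' α α' : ℝ)
    (hF : Continuous F) (hFmono : Monotone F) (hF01 : ∀ x, 0 ≤ F x ∧ F x ≤ 1)
    (hΔD : 0 < ΔD) (hΔ : ΔD < ΔC) (hC : ΔC ≤ ΔC') (hD : ΔD ≤ ΔD') (hΔ' : ΔD' < ΔC')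
    (hα : α ∈ Set.Icc (0 : ℝ) 1) (hα' : α' ∈ Set.Icc (0 : ℝ) 1)
    (heq : 1 - α = F (α * ΔC + (1 - α) * ΔD))
    (heq' : 1 - α' = F (α' * ΔC' + (1 - α') * ΔD')) :
    α' ≤ α :=
  comparative_statics_gains_general F ΔC ΔD ΔC' ΔD' α α' hFmono hΔ hC hD hα' heq heq'
end

section
/- Monotonicity in the tolerance distribution: if F and F' are continuous nondecreasing CDFs with F'(x) ≤ F(x) for all x (i.e., F' stochastically dominates F), ΔC > ΔD > 0, and α*, α*' are the unique solutions of 1 - α = F(αΔC + (1-α)ΔD) and 1 - α = F'(αΔC + (1-α)ΔD) respectively, then α*' ≥ α*. (Greater tolerance yields more cooperation in the symmetric particularly cooperative equilibrium.) -/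
/-! A point where the strictly decreasing `1 - α` meets the nondecreasing `F (α ΔC + (1 - α) ΔD)`
can only move right when `F` is lowered pointwise to `F'`: at `α' < α` we would get
`1 - α' = F' (…) ≤ F (…) ≤ 1 - α`. -/

theorem le_of_strictAnti_eq_of_le_monotone {α β : Type*} [LinearOrder α] [Preorder β]
    {f g G : α → β} (hf : StrictAnti f) (hG : Monotone G) (hgG : g ≤ G) {a b : α}
    (ha : f a = G a) (hb : f b = g b) : a ≤ b := by
  by_contra! hba
  have hlt : f a < f b := hf hba
  have hle : f b ≤ f a :=
    calc f b = g b := hb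
      _ ≤ G b := hgG b
      _ ≤ G a := hG hba.le
      _ = f a := ha.symm
  exact hle.not_gt hlt

theorem monotone_mul_add_one_sub_mul {c d : ℝ} (hdc : d ≤ c) :
    Monotone fun t : ℝ => t * c + (1 - t) * d := fun s t hst => by
  nlinarith

theorem comparative_statics_tolerance_general (F F' : ℝ → ℝ) (ΔC ΔD α α' : ℝ)
    (hFmono : Monotone F)
    (hDom : ∀ x, F' x ≤ F x)
    (hΔ : ΔD < ΔC)
    (heq : 1 - α = F (α * ΔC + (1 - α) * ΔD))
    (heq' : 1 - α' = F' (α' * ΔC + (1 - α') * ΔD)) :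
    α ≤ α' :=
  le_of_strictAnti_eq_of_le_monotone (f := fun t : ℝ => 1 - t)
    (fun _ _ h => sub_lt_sub_left h 1)
    (hFmono.comp (monotone_mul_add_one_sub_mul hΔ.le)) (fun _ => hDom _) heq heq'

/-- Monotonicity in the tolerance distribution: if `F'` stochastically dominates `F`
(i.e., `F' ≤ F` pointwise) and `ΔC > ΔD > 0`, then the equilibrium cooperation
probability `α*'` under `F'` is at least the one `α*` under `F`. -/
theorem comparative_statics_tolerance (F F' : ℝ → ℝ) (ΔC ΔD α α' : ℝ)
    (hF : Continuous F) (hFmono : Monotone F) (hF01 : ∀ x, 0 ≤ F x ∧ F x ≤ 1)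
    (hF' : Continuous F') (hF'mono : Monotone F') (hF'01 : ∀ x, 0 ≤ F' x ∧ F' x ≤ 1)
    (hDom : ∀ x, F' x ≤ F x)
    (hΔD : 0 < ΔD) (hΔ : ΔD < ΔC)
    (hα : α ∈ Set.Icc (0 : ℝ) 1) (hα' : α' ∈ Set.Icc (0 : ℝ) 1)
    (heq : 1 - α = F (α * ΔC + (1 - α) * ΔD))
    (heq' : 1 - α' = F' (α' * ΔC + (1 - α') * ΔD)) :
    α ≤ α' :=
  comparative_statics_tolerance_general F F' ΔC ΔD α α' hFmono hDom hΔ heq heq'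
end
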